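/- Let A and B be disjoint subsets of {1,…,p} with |A ∪ B| ≤ 6s*. Enumerate B = {k_1,…,k_m} and set A_ℓ = A ∪ {k_1,…,k_ℓ} for ℓ = 0,…,m (so A_0 = A). Then for every w ∈ ℝ^n, ‖Φ_{A∪B} w‖² − ‖Φ_A w‖² ≤ Σ_{ℓ=0}^{m−1} ⟨(I − Φ_{A_ℓ}) X_{k_{ℓ+1}}, w⟩² / (nν). -/

import Mathlib

/-!
Adjoining a column `X k` to `S` adds to `Φ_S` the projection onto the residual
`v = X k - Φ_S (X k)`, which is orthogonal to the span of `X_S`; hence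
`‖Φ_{S ∪ {k}} w‖² - ‖Φ_S w‖² = ⟨v, w⟩² / ‖v‖²`. Since `v = X k - ∑_{j ∈ S} c_j X_j` is a
combination of the columns in `S ∪ {k}` with a coefficient `1`, the restricted eigenvalue
condition gives `‖v‖² ≥ n ν`. Adjoining the elements of `B` one at a time and summing telescopes.
-/

open scoped BigOperators
open Finset

noncomputable section

/-- Span of the columns `X j`, `j ∈ S`. -/
def colSpan {n p : ℕ} (X : Fin p → EuclideanSpace ℝ (Fin n)) (S : Finset (Fin p)) :
    Submodule ℝ (EuclideanSpace ℝ (Fin n)) :=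
  Submodule.span ℝ (X '' ↑S)

/-- `Φ_S`, the orthogonal projection of ℝ^n onto the span of the columns in `S`. -/
noncomputable def proj {n p : ℕ} (X : Fin p → EuclideanSpace ℝ (Fin n)) (S : Finset (Fin p)) :
    EuclideanSpace ℝ (Fin n) →ₗ[ℝ] EuclideanSpace ℝ (Fin n) :=
  (colSpan X S).subtype ∘ₗ ((colSpan X S).orthogonalProjectionOnto).toLinearMap

/-- Restricted eigenvalue condition: `‖X_S w‖² ≥ n ν ‖w‖²` for all `S` with `|S| ≤ m`. -/
def RECond {n p : ℕ} (X : Fin p → EuclideanSpace ℝ (Fin n)) (ν : ℝ) (m : ℕ) : Prop :=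
  ∀ S : Finset (Fin p), S.card ≤ m → ∀ w : Fin p → ℝ,
    (n : ℝ) * ν * ∑ j ∈ S, w j ^ 2 ≤ ‖∑ j ∈ S, w j • X j‖ ^ 2

end

open scoped RealInnerProductSpace

namespace Submodule

variable {E : Type*} [NormedAddCommGroup E] [InnerProductSpace ℝ E]

theorem IsOrtho.starProjection_sup_apply {U V : Submodule ℝ E}
    [U.HasOrthogonalProjection] [V.HasOrthogonalProjection] [(U ⊔ V).HasOrthogonalProjection]
    (h : U ⟂ V) (w : E) :
    (U ⊔ V).starProjection w = U.starProjection w + V.starProjection w := by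
  refine eq_starProjection_of_mem_of_inner_eq_zero
    (add_mem_sup (U.starProjection_apply_mem w) (V.starProjection_apply_mem w)) fun z hz => ?_
  obtain ⟨u, hu, v, hv, rfl⟩ := mem_sup.mp hz
  have hUu := U.starProjection_inner_eq_zero w u hu
  have hVv := V.starProjection_inner_eq_zero w v hv
  have hUv := isOrtho_iff_inner_eq.mp h _ (U.starProjection_apply_mem w) v hv
  have hVu := isOrtho_iff_inner_eq.mp h.symm _ (V.starProjection_apply_mem w) u hu
  simp only [inner_add_right, inner_add_left, inner_sub_left] at hUu hVv ⊢
  linarith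

theorem norm_sq_starProjection_span_singleton (v w : E) :
    ‖(ℝ ∙ v).starProjection w‖ ^ 2 = ⟪v, w⟫ ^ 2 / ‖v‖ ^ 2 := by
  rcases eq_or_ne v 0 with rfl | hv
  · simp
  rw [starProjection_singleton, norm_smul, mul_pow, Real.norm_eq_abs, sq_abs,
    RCLike.ofReal_real_eq_id, id]
  have : ‖v‖ ≠ 0 := norm_ne_zero_iff.mpr hv
  field_simp

theorem norm_sq_starProjection_sup_span_singleton [FiniteDimensional ℝ E]
    (K : Submodule ℝ E) (x w : E) :
    ‖(K ⊔ ℝ ∙ x).starProjection w‖ ^ 2 =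
      ‖K.starProjection w‖ ^ 2 +
        ⟪x - K.starProjection x, w⟫ ^ 2 / ‖x - K.starProjection x‖ ^ 2 := by
  set v := x - K.starProjection x
  have hsup : K ⊔ ℝ ∙ x = K ⊔ ℝ ∙ v := by
    have hx : x = v + K.starProjection x := (sub_add_cancel _ _).symm
    refine le_antisymm (sup_le le_sup_left ?_) (sup_le le_sup_left ?_) <;>
      rw [span_singleton_le_iff_mem]
    · rw [hx]
      exact add_mem (mem_sup_right (mem_span_singleton_self v))
        (mem_sup_left (K.starProjection_apply_mem x))
    · exact sub_mem (mem_sup_right (mem_span_singleton_self x))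
        (mem_sup_left (K.starProjection_apply_mem x))
  have hortho : K ⟂ ℝ ∙ v :=
    (isOrtho_orthogonal_right K).mono_right
      ((span_singleton_le_iff_mem _ _).mpr (K.sub_starProjection_mem_orthogonal x))
  simp only [hsup]
  rw [hortho.starProjection_sup_apply, norm_add_sq_real,
    isOrtho_iff_inner_eq.mp hortho _ (K.starProjection_apply_mem w) _
      ((ℝ ∙ v).starProjection_apply_mem w),
    norm_sq_starProjection_span_singleton]
  ring

end Submodule

theorem sub_le_sum_take_of_insert {α : Type*} [DecidableEq α] (f : Finset α → ℝ)
    (g : Finset α → α → ℝ) (l : List α) (hnd : l.Nodup) (A : Finset α)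
    (hdisj : Disjoint A l.toFinset)
    (hstep : ∀ S k, k ∉ S → insert k S ⊆ A ∪ l.toFinset → f (insert k S) - f S ≤ g S k) :
    f (A ∪ l.toFinset) - f A ≤ ∑ ℓ : Fin l.length, g (A ∪ (l.take ℓ).toFinset) (l.get ℓ) := by
  induction l generalizing A with
  | nil => simp
  | cons k l ih =>
    obtain ⟨hkl, hnd⟩ := List.nodup_cons.mp hnd
    have hkA : k ∉ A := fun hk => disjoint_left.mp hdisj hk (by simp)
    have hunion : A ∪ (k :: l).toFinset = insert k A ∪ l.toFinset := by
      rw [List.toFinset_cons, union_insert, insert_union]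
    have hdisj' : Disjoint (insert k A) l.toFinset := by
      rw [disjoint_insert_left, List.mem_toFinset]
      exact ⟨hkl, hdisj.mono_right (by rw [List.toFinset_cons]; exact subset_insert _ _)⟩
    have hfirst := hstep A k hkA (by rw [hunion]; exact union_subset_left subset_rfl)
    have hrest := ih hnd (insert k A) hdisj' (hunion ▸ hstep)
    rw [hunion]
    simp only [List.length_cons, Fin.sum_univ_succ, Fin.val_zero, List.take_zero,
      List.toFinset_nil, union_empty, List.get_cons_zero, List.get_cons_succ', Fin.val_succ,
      List.take_succ_cons, List.toFinset_cons, union_insert, insert_union] at hrest ⊢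
    linarith

section Columns

variable {n p : ℕ} (X : Fin p → EuclideanSpace ℝ (Fin n))

theorem proj_apply (S : Finset (Fin p)) (w : EuclideanSpace ℝ (Fin n)) :
    proj X S w = (colSpan X S).starProjection w :=
  rfl

theorem colSpan_insert (S : Finset (Fin p)) (k : Fin p) :
    colSpan X (insert k S) = colSpan X S ⊔ ℝ ∙ X k := by
  rw [colSpan, coe_insert, Set.image_insert_eq, Submodule.span_insert, sup_comm]
  rfl

variable {X}

theorem RECond.mul_le_norm_sub_sq {ν : ℝ} {m : ℕ} (hRE : RECond X ν m) (hν : 0 ≤ ν)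
    {S : Finset (Fin p)} {k : Fin p} (hk : k ∉ S) (hcard : (insert k S).card ≤ m)
    {y : EuclideanSpace ℝ (Fin n)} (hy : y ∈ colSpan X S) :
    (n : ℝ) * ν ≤ ‖X k - y‖ ^ 2 := by
  obtain ⟨c, rfl⟩ := (Submodule.mem_span_image_finset_iff_exists_fun' ℝ).mp hy
  let u : Fin p → ℝ := fun j => if j = k then 1 else -c j
  have huk : u k = 1 := if_pos rfl
  have hu : ∀ j ∈ S, u j = -c j := fun j hj => if_neg (ne_of_mem_of_not_mem hj hk)
  have hcomb : ∑ j ∈ insert k S, u j • X j = X k - ∑ j ∈ S, c j • X j := by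
    rw [sum_insert hk, sum_congr rfl fun j hj => by rw [hu j hj, neg_smul], sum_neg_distrib,
      huk, one_smul, sub_eq_add_neg]
  have hone : 1 ≤ ∑ j ∈ insert k S, u j ^ 2 := by
    rw [sum_insert hk, huk, one_pow, le_add_iff_nonneg_right]
    exact sum_nonneg fun j _ => sq_nonneg _
  calc (n : ℝ) * ν ≤ n * ν * ∑ j ∈ insert k S, u j ^ 2 :=
        le_mul_of_one_le_right (by positivity) hone
    _ ≤ ‖X k - ∑ j ∈ S, c j • X j‖ ^ 2 := hcomb ▸ hRE _ hcard u

theorem norm_sq_proj_insert_sub_le (hn : 0 < n) {ν : ℝ} (hν : 0 < ν) {m : ℕ}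
    (hRE : RECond X ν m) {S : Finset (Fin p)} {k : Fin p} (hk : k ∉ S)
    (hcard : (insert k S).card ≤ m) (w : EuclideanSpace ℝ (Fin n)) :
    ‖proj X (insert k S) w‖ ^ 2 - ‖proj X S w‖ ^ 2 ≤
      (inner ℝ (X k - proj X S (X k)) w : ℝ) ^ 2 / ((n : ℝ) * ν) := by
  have hres := hRE.mul_le_norm_sub_sq hν.le hk hcard
    ((colSpan X S).starProjection_apply_mem (X k))
  rw [proj_apply, proj_apply, proj_apply, colSpan_insert,
    Submodule.norm_sq_starProjection_sup_span_singleton, add_sub_cancel_left]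
  exact div_le_div_of_nonneg_left (sq_nonneg _) (by positivity) hres

end Columns

theorem stmt3_general {n p s : ℕ} (hn : 0 < n)
    (X : Fin p → EuclideanSpace ℝ (Fin n))
    {ν : ℝ} (hν : 0 < ν) (hRE : RECond X ν (6 * s))
    (A B : Finset (Fin p)) (hdisj : Disjoint A B) (hcard : (A ∪ B).card ≤ 6 * s)
    (l : List (Fin p)) (hnd : l.Nodup) (hlB : l.toFinset = B)
    (w : EuclideanSpace ℝ (Fin n)) :
    ‖proj X (A ∪ B) w‖ ^ 2 - ‖proj X A w‖ ^ 2 ≤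
      ∑ ℓ : Fin l.length,
        (inner ℝ (X (l.get ℓ) - proj X (A ∪ (l.take ℓ).toFinset) (X (l.get ℓ))) w : ℝ) ^ 2 /
          ((n : ℝ) * ν) := by
  subst hlB
  exact sub_le_sum_take_of_insert (fun S => ‖proj X S w‖ ^ 2) _ l hnd A hdisj
    fun S k hk hsub => norm_sq_proj_insert_sub_le hn hν hRE hk ((card_le_card hsub).trans hcard) w

/-- telescoping bound. B is enumerated by a duplicate-free list l = (k_1, …, k_m),
A_ℓ = A ∪ {k_1,…,k_ℓ}, and ‖Φ_{A∪B} w‖² − ‖Φ_A w‖² ≤ Σ_ℓ ⟨(I − Φ_{A_ℓ})X_{k_{ℓ+1}}, w⟩²/(nν). -/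
theorem stmt3 {n p s : ℕ} (hn : 0 < n) (hp : 0 < p) (hs : 0 < s)
    (X : Fin p → EuclideanSpace ℝ (Fin n))
    (hX : ∀ j, ‖X j‖ = Real.sqrt n)
    {ν : ℝ} (hν : 0 < ν) (hRE : RECond X ν (6 * s))
    (A B : Finset (Fin p)) (hdisj : Disjoint A B) (hcard : (A ∪ B).card ≤ 6 * s)
    (l : List (Fin p)) (hnd : l.Nodup) (hlB : l.toFinset = B)
    (w : EuclideanSpace ℝ (Fin n)) :
    ‖proj X (A ∪ B) w‖ ^ 2 - ‖proj X A w‖ ^ 2 ≤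
      ∑ ℓ : Fin l.length,
        (inner ℝ (X (l.get ℓ) - proj X (A ∪ (l.take ℓ).toFinset) (X (l.get ℓ))) w : ℝ) ^ 2 /
          ((n : ℝ) * ν) :=
  stmt3_general hn X hν hRE A B hdisj hcard l hnd hlB w
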